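/- Let k be an algebraically closed field of characteristic ℓ > 0, and let G be a finite group with normal subgroups M and N such that M ≤ N. Let V be a simple kM-module and suppose that W := Ind^N_M V is a simple kN-module. Then V extends to its stabilizer G_V if and only if W extends to its stabilizer G_W. -/
import Mathlib


noncomputable section

open CategoryTheory

universe u

variable {k : Type u} [Field k] {G : Type u} [Group G]

/-- `g` conjugates the representation `ρ` of the subgroup `K` to an isomorphic one. -/
def IsConjInv {V : Type u} [AddCommGroup V] [Module k V] (K : Subgroup G)
    (ρ : Representation k ↥K V) (g : G) : Prop :=
  ∃ e : V ≃ₗ[k] V, ∀ (x : G) (hx : x ∈ K) (hx' : g * x * g⁻¹ ∈ K) (v : V),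
    e (ρ ⟨x, hx⟩ v) = ρ ⟨g * x * g⁻¹, hx'⟩ (e v)

/-- The stabilizer, inside a subgroup `X` normalizing `K`, of the isomorphism class of a
representation `ρ` of `K`. -/
def stabilizerIn {V : Type u} [AddCommGroup V] [Module k V] (X K : Subgroup G)
    (hX : ∀ g ∈ X, ∀ x ∈ K, g * x * g⁻¹ ∈ K)
    (ρ : Representation k ↥K V) : Subgroup G where
  carrier := {g | g ∈ X ∧ IsConjInv K ρ g}
  one_mem' := by
    refine ⟨X.one_mem, LinearEquiv.refl k V, ?_⟩
    intro x hx hx' v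
    have h1 : (⟨1 * x * 1⁻¹, hx'⟩ : ↥K) = ⟨x, hx⟩ := Subtype.ext (by group)
    rw [h1]
    rfl
  mul_mem' := by
    rintro a b ⟨haX, ea, hea⟩ ⟨hbX, eb, heb⟩
    refine ⟨X.mul_mem haX hbX, eb.trans ea, ?_⟩
    intro x hx hx' v
    have hb' : b * x * b⁻¹ ∈ K := hX b hbX x hx
    have ha' : a * (b * x * b⁻¹) * a⁻¹ ∈ K := hX a haX _ hb'
    have key : (⟨a * (b * x * b⁻¹) * a⁻¹, ha'⟩ : ↥K) = ⟨a * b * x * (a * b)⁻¹, hx'⟩ :=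
      Subtype.ext (by group)
    simp only [LinearEquiv.trans_apply]
    rw [heb x hx hb' v, hea _ hb' ha' (eb v), key]
  inv_mem' := by
    rintro a ⟨haX, e, he⟩
    refine ⟨X.inv_mem haX, e.symm, ?_⟩
    intro x hx hx' v
    have h2 : a * (a⁻¹ * x * a⁻¹⁻¹) * a⁻¹ ∈ K := hX a haX _ hx'
    have key : (⟨a * (a⁻¹ * x * a⁻¹⁻¹) * a⁻¹, h2⟩ : ↥K) = ⟨x, hx⟩ := Subtype.ext (by group)
    have h3 := he _ hx' h2 (e.symm v)
    rw [key, e.apply_symm_apply] at h3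
    rw [← h3, e.symm_apply_apply]

/-- A representation is simple (irreducible). -/
def RepIsSimple {Γ V : Type u} [Group Γ] [AddCommGroup V] [Module k V]
    (ρ : Representation k Γ V) : Prop :=
  Nontrivial V ∧ ∀ p : Submodule k V, (∀ (g : Γ) (v : V), v ∈ p → ρ g v ∈ p) → p = ⊥ ∨ p = ⊤

/-- The carrier of the representation of `Γ` induced along `ι : K →* Γ`
(realized as functions `Γ → V` with the usual equivariance property). -/
def indCarrier {Γ K V : Type u} [Group Γ] [Group K] [AddCommGroup V] [Module k V]
    (ι : K →* Γ) (ρ : Representation k K V) : Submodule k (Γ → V) where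
  carrier := {f | ∀ (h : K) (x : Γ), f (ι h * x) = ρ h (f x)}
  add_mem' := fun {f g} hf hg => by
    intro h x
    simp only [Pi.add_apply, hf h x, hg h x, map_add]
  zero_mem' := by
    intro h x
    simp
  smul_mem' := fun c {f} hf => by
    intro h x
    simp only [Pi.smul_apply, hf h x, map_smul]

/-- The representation of `Γ` induced along `ι : K →* Γ` from `ρ`. -/
def indRep {Γ K V : Type u} [Group Γ] [Group K] [AddCommGroup V] [Module k V]
    (ι : K →* Γ) (ρ : Representation k K V) :
    Representation k Γ ↥(indCarrier ι ρ) where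
  toFun g :=
    { toFun := fun f => ⟨fun x => (f : Γ → V) (x * g), by
        intro h x
        simpa [mul_assoc] using f.2 h (x * g)⟩
      map_add' := fun f f' => rfl
      map_smul' := fun c f => rfl }
  map_one' := by
    ext f x
    simp
  map_mul' g g' := by
    ext f x
    simp [mul_assoc]

/-- Two representations of the same group are isomorphic. -/
def IsRepIso {Γ V W : Type u} [Group Γ] [AddCommGroup V] [Module k V] [AddCommGroup W]
    [Module k W] (ρ₁ : Representation k Γ V) (ρ₂ : Representation k Γ W) : Prop :=
  ∃ e : V ≃ₗ[k] W, ∀ (g : Γ) (v : V), e (ρ₁ g v) = ρ₂ g (e v)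

/-- For subgroups `K ≤ L`, the `L`-representation `ρL` lies over the `K`-representation `ρK`,
i.e. there is a nonzero `K`-equivariant map from `ρK` to the restriction of `ρL`. -/
def LiesOverDep {V W : Type u} [AddCommGroup V] [Module k V] [AddCommGroup W] [Module k W]
    (K L : Subgroup G) (ρK : Representation k ↥K V) (ρL : Representation k ↥L W) : Prop :=
  ∃ T : V →ₗ[k] W, T ≠ 0 ∧ ∀ (x : G) (hK : x ∈ K) (hL : x ∈ L) (v : V),
    T (ρK ⟨x, hK⟩ v) = ρL ⟨x, hL⟩ (T v)

/-- For subgroups `K ≤ L`, the restriction to `K` of the `L`-representation `ρL` is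
isomorphic to `ρK`. -/
def RestrictIsoDep {V W : Type u} [AddCommGroup V] [Module k V] [AddCommGroup W] [Module k W]
    (K L : Subgroup G) (ρK : Representation k ↥K V) (ρL : Representation k ↥L W) : Prop :=
  ∃ e : V ≃ₗ[k] W, ∀ (x : G) (hK : x ∈ K) (hL : x ∈ L) (v : V),
    e (ρK ⟨x, hK⟩ v) = ρL ⟨x, hL⟩ (e v)

/-- For subgroups `K ≤ L`, the representation `ρ` of `K` extends to `L`: there is a
representation of `L` whose restriction to `K` is isomorphic to `ρ`. -/
def RepExtendsDep {V : Type u} [AddCommGroup V] [Module k V]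
    (K L : Subgroup G) (ρ : Representation k ↥K V) : Prop :=
  ∃ σ : Representation k ↥L V, ∃ e : V ≃ₗ[k] V, ∀ (g : G) (hK : g ∈ K) (hL : g ∈ L) (v : V),
    e (ρ ⟨g, hK⟩ v) = σ ⟨g, hL⟩ (e v)

lemma stabilizerIn_le {V : Type u} [AddCommGroup V] [Module k V] (X K : Subgroup G)
    (hX : ∀ g ∈ X, ∀ x ∈ K, g * x * g⁻¹ ∈ K) (ρ : Representation k ↥K V) :
    stabilizerIn X K hX ρ ≤ X := fun _ hg => hg.1


section Aux
variable {k : Type u} [Field k] {G : Type u} [Group G]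

lemma mem_stabilizerIn_top {V : Type u} [AddCommGroup V] [Module k V] {K : Subgroup G}
    {hX : ∀ g ∈ (⊤:Subgroup G), ∀ x ∈ K, g * x * g⁻¹ ∈ K}
    {ρ : Representation k ↥K V} {g : G} :
    g ∈ stabilizerIn ⊤ K hX ρ ↔ IsConjInv K ρ g :=
  ⟨fun h => h.2, fun h => ⟨trivial, h⟩⟩

/-- transported representation along a linear equiv -/
def conjRep {Γ Y V : Type u} [Group Γ] [AddCommGroup Y] [Module k Y]
    [AddCommGroup V] [Module k V]
    (τ : Representation k Γ Y) (j : V ≃ₗ[k] Y) : Representation k Γ V where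
  toFun g := j.symm.toLinearMap ∘ₗ (τ g ∘ₗ j.toLinearMap)
  map_one' := by ext v; simp
  map_mul' g g' := by
    ext v
    simp [Module.End.mul_apply]

lemma conjRep_apply {Γ Y V : Type u} [Group Γ] [AddCommGroup Y] [Module k Y]
    [AddCommGroup V] [Module k V]
    (τ : Representation k Γ Y) (j : V ≃ₗ[k] Y) (g : Γ) (v : V) :
    conjRep τ j g v = j.symm (τ g (j v)) := rfl

lemma isConjInv_of_mem {V : Type u} [AddCommGroup V] [Module k V] {K : Subgroup G}
    {ρ : Representation k ↥K V} {x : G} (hx : x ∈ K) : IsConjInv K ρ x := by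
  refine ⟨LinearEquiv.ofLinear (ρ ⟨x, hx⟩) (ρ ⟨x⁻¹, K.inv_mem hx⟩) ?_ ?_, ?_⟩
  · ext v
    simp only [LinearMap.comp_apply, LinearMap.id_apply, LinearMap.id_coe, id_eq]
    have : (⟨x, hx⟩ : ↥K) * ⟨x⁻¹, K.inv_mem hx⟩ = 1 := Subtype.ext (by simp [mul_assoc])
    rw [show (ρ ⟨x, hx⟩) ((ρ ⟨x⁻¹, K.inv_mem hx⟩) v) = (ρ (⟨x, hx⟩ * ⟨x⁻¹, K.inv_mem hx⟩)) v
      from by rw [map_mul]; rfl, this, map_one]; rfl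
  · ext v
    simp only [LinearMap.comp_apply, LinearMap.id_apply, LinearMap.id_coe, id_eq]
    have : (⟨x⁻¹, K.inv_mem hx⟩ : ↥K) * ⟨x, hx⟩ = 1 := Subtype.ext (by simp [mul_assoc])
    rw [show (ρ ⟨x⁻¹, K.inv_mem hx⟩) ((ρ ⟨x, hx⟩) v) = (ρ (⟨x⁻¹, K.inv_mem hx⟩ * ⟨x, hx⟩)) v
      from by rw [map_mul]; rfl, this, map_one]; rfl
  · intro y hy hy' v
    have h1 : (⟨x, hx⟩ : ↥K) * ⟨y, hy⟩ = ⟨x*y*x⁻¹, hy'⟩ * ⟨x, hx⟩ := Subtype.ext (by simp [mul_assoc])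
    show ρ ⟨x, hx⟩ (ρ ⟨y, hy⟩ v) = ρ ⟨x*y*x⁻¹, hy'⟩ (ρ ⟨x, hx⟩ v)
    rw [← Module.End.mul_apply, ← map_mul, h1, map_mul, Module.End.mul_apply]

/-- Schur's lemma. -/
lemma schur_smul_id {Γ Y : Type u} [Group Γ] [AddCommGroup Y] [Module k Y]
    [IsAlgClosed k] [FiniteDimensional k Y]
    (τ : Representation k Γ Y) (hs : RepIsSimple τ)
    (T : Y →ₗ[k] Y) (hT : ∀ (g : Γ) (y : Y), T (τ g y) = τ g (T y)) :
    ∃ c : k, ∀ y, T y = c • y := by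
  haveI : Nontrivial Y := hs.1
  obtain ⟨c, hc⟩ := Module.End.exists_eigenvalue (T : Module.End k Y)
  refine ⟨c, ?_⟩
  have hinv : ∀ (g : Γ) (y : Y), y ∈ Module.End.eigenspace (T : Module.End k Y) c →
      τ g y ∈ Module.End.eigenspace (T : Module.End k Y) c := by
    intro g y hy
    rw [Module.End.mem_eigenspace_iff] at hy ⊢
    show T (τ g y) = c • τ g y
    rw [hT g y, hy, map_smul]
  rcases hs.2 _ hinv with h | h
  · exfalso
    obtain ⟨v, hv⟩ := hc.exists_hasEigenvector
    have : v ∈ Module.End.eigenspace (T : Module.End k Y) c := hv.1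
    rw [h] at this
    exact hv.2 (by simpa using this)
  · intro y
    have : y ∈ Module.End.eigenspace (T : Module.End k Y) c := h ▸ Submodule.mem_top
    simpa [Module.End.mem_eigenspace_iff] using this

end Aux

section Aux2
variable {k : Type u} [Field k] {G : Type u} [Group G]
variable {V : Type u} [AddCommGroup V] [Module k V]
variable {M N : Subgroup G} (hMN : M ≤ N) (ρ : Representation k ↥M V)

/-- A nonzero `g`-twisted self-intertwiner of a simple representation puts `g`
in the stabilizer. -/
lemma isConjInv_of_hom (hM : M.Normal) (hVs : RepIsSimple ρ) (g : G)
    (φ : V →ₗ[k] V) (hφ : φ ≠ 0)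
    (hcomm : ∀ (x : G) (hx : x ∈ M) (v : V),
      φ (ρ ⟨x, hx⟩ v) = ρ ⟨g * x * g⁻¹, hM.conj_mem x hx g⟩ (φ v)) :
    IsConjInv M ρ g := by
  have hker : LinearMap.ker φ = ⊥ := by
    have hinv : ∀ (m : ↥M) (v : V), v ∈ LinearMap.ker φ → ρ m v ∈ LinearMap.ker φ := by
      rintro ⟨x, hx⟩ v hv
      rw [LinearMap.mem_ker] at hv ⊢
      rw [hcomm x hx v, hv, map_zero]
    rcases hVs.2 (LinearMap.ker φ) hinv with h | h
    · exact h
    · exact absurd (LinearMap.ker_eq_top.mp h) hφ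
  have hrange : LinearMap.range φ = ⊤ := by
    have hinv : ∀ (m : ↥M) (w : V), w ∈ LinearMap.range φ → ρ m w ∈ LinearMap.range φ := by
      rintro ⟨x, hx⟩ w hw
      obtain ⟨v, rfl⟩ := hw
      have hy : g⁻¹ * x * g ∈ M := by
        have := hM.conj_mem x hx g⁻¹
        rwa [inv_inv] at this
      refine ⟨ρ ⟨g⁻¹ * x * g, hy⟩ v, ?_⟩
      rw [hcomm _ hy v]
      have : (⟨g * (g⁻¹ * x * g) * g⁻¹, hM.conj_mem _ hy g⟩ : ↥M) = ⟨x, hx⟩ :=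
        Subtype.ext (by group)
      rw [this]
    rcases hVs.2 (LinearMap.range φ) hinv with h | h
    · exact absurd (LinearMap.range_eq_bot.mp h) hφ
    · exact h
  refine ⟨LinearEquiv.ofBijective φ
    ⟨LinearMap.ker_eq_bot.mp hker, LinearMap.range_eq_top.mp hrange⟩, ?_⟩
  intro x hx hx' v
  have := hcomm x hx v
  show φ (ρ ⟨x, hx⟩ v) = ρ ⟨g*x*g⁻¹, hx'⟩ (φ v)
  rw [this]

/-- The function supported on `M` with value `ρ(-) v`. -/
def fOnFun (N : Subgroup G) (v : V) : ↥N → V :=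
  fun x => @dite _ ((x : G) ∈ M) (Classical.dec _) (fun h => ρ ⟨(x : G), h⟩ v) (fun _ => 0)

lemma fOnFun_mem (v : V) : fOnFun ρ N v ∈ indCarrier (Subgroup.inclusion hMN) ρ := by
  intro h x
  have hco : ((Subgroup.inclusion hMN h * x : ↥N) : G) = (h : G) * (x : G) := rfl
  by_cases hx : (x : G) ∈ M
  · have hhx : ((Subgroup.inclusion hMN h * x : ↥N) : G) ∈ M := by
      rw [hco]; exact M.mul_mem h.2 hx
    rw [fOnFun, dif_pos hhx, fOnFun, dif_pos hx]
    have : (⟨((Subgroup.inclusion hMN h * x : ↥N) : G), hhx⟩ : ↥M) = h * ⟨(x : G), hx⟩ :=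
      Subtype.ext (by rw [hco]; rfl)
    rw [this, map_mul, Module.End.mul_apply]
  · have hhx : ¬ ((Subgroup.inclusion hMN h * x : ↥N) : G) ∈ M := by
      rw [hco]
      intro hc
      exact hx (by simpa using M.mul_mem (M.inv_mem h.2) hc)
    rw [fOnFun, dif_neg hhx, fOnFun, dif_neg hx, map_zero]

/-- `v ↦ fOnFun v` as a linear map into the induced module. -/
def fOnL : V →ₗ[k] ↥(indCarrier (Subgroup.inclusion hMN) ρ) where
  toFun v := ⟨fOnFun ρ N v, fOnFun_mem hMN ρ v⟩
  map_add' v w := by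
    apply Subtype.ext
    funext x
    show fOnFun ρ N (v + w) x = fOnFun ρ N v x + fOnFun ρ N w x
    unfold fOnFun
    by_cases hx : (x : G) ∈ M
    · rw [dif_pos hx, dif_pos hx, dif_pos hx, map_add]
    · rw [dif_neg hx, dif_neg hx, dif_neg hx, add_zero]
  map_smul' c v := by
    apply Subtype.ext
    funext x
    show fOnFun ρ N (c • v) x = c • fOnFun ρ N v x
    unfold fOnFun
    by_cases hx : (x : G) ∈ M
    · rw [dif_pos hx, dif_pos hx, map_smul]
    · rw [dif_neg hx, dif_neg hx, smul_zero]

lemma fOnL_apply_mem (v : V) (x : ↥N) (hx : (x : G) ∈ M) :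
    ((fOnL hMN ρ v : ↥(indCarrier (Subgroup.inclusion hMN) ρ)) : ↥N → V) x
      = ρ ⟨(x : G), hx⟩ v :=
  dif_pos hx

lemma fOnL_apply_notMem (v : V) (x : ↥N) (hx : ¬ (x : G) ∈ M) :
    ((fOnL hMN ρ v : ↥(indCarrier (Subgroup.inclusion hMN) ρ)) : ↥N → V) x = 0 :=
  dif_neg hx

lemma fOnL_apply_one (v : V) :
    ((fOnL hMN ρ v : ↥(indCarrier (Subgroup.inclusion hMN) ρ)) : ↥N → V) 1 = v := by
  have h1 : ((1 : ↥N) : G) ∈ M := M.one_mem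
  rw [fOnL_apply_mem hMN ρ v 1 h1]
  have : (⟨((1:↥N):G), h1⟩ : ↥M) = 1 := Subtype.ext rfl
  rw [this, map_one]
  rfl

lemma fOnL_injective : Function.Injective (fOnL hMN ρ) := by
  intro v w h
  have := congrFun (congrArg (Subtype.val) h) 1
  rwa [fOnL_apply_one, fOnL_apply_one] at this

/-- `fOnL` intertwines `ρ` with the induced representation. -/
lemma fOnL_equivariant (x : G) (hx : x ∈ M) (v : V) :
    fOnL hMN ρ (ρ ⟨x, hx⟩ v)
      = indRep (Subgroup.inclusion hMN) ρ ⟨x, hMN hx⟩ (fOnL hMN ρ v) := by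
  apply Subtype.ext
  funext y
  show fOnFun ρ N (ρ ⟨x, hx⟩ v) y = fOnFun ρ N v (y * ⟨x, hMN hx⟩)
  have hco : ((y * (⟨x, hMN hx⟩ : ↥N) : ↥N) : G) = (y : G) * x := rfl
  by_cases hy : (y : G) ∈ M
  · have hyx : ((y * (⟨x, hMN hx⟩ : ↥N) : ↥N) : G) ∈ M := by
      rw [hco]; exact M.mul_mem hy hx
    rw [fOnFun, dif_pos hy, fOnFun, dif_pos hyx]
    have h2 : (⟨((y * (⟨x, hMN hx⟩ : ↥N) : ↥N) : G), hyx⟩ : ↥M) = ⟨(y:G), hy⟩ * ⟨x, hx⟩ :=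
      Subtype.ext (by rw [hco]; rfl)
    rw [h2, map_mul, Module.End.mul_apply]
  · have hyx : ¬ ((y * (⟨x, hMN hx⟩ : ↥N) : ↥N) : G) ∈ M := by
      rw [hco]
      intro hc
      exact hy (by simpa using M.mul_mem hc (M.inv_mem hx))
    rw [fOnFun, dif_neg hy, fOnFun, dif_neg hyx]

end Aux2

section Aux3
variable {k : Type u} [Field k] {G : Type u} [Group G]
variable {V : Type u} [AddCommGroup V] [Module k V]
variable {M N : Subgroup G} (hMN : M ≤ N) (ρ : Representation k ↥M V)

lemma indCarrier_prop (f : ↥(indCarrier (Subgroup.inclusion hMN) ρ)) (h : ↥M) (x : ↥N) :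
    (f : ↥N → V) (Subgroup.inclusion hMN h * x) = ρ h ((f : ↥N → V) x) :=
  f.2 h x

lemma indRep_apply (g : ↥N) (f : ↥(indCarrier (Subgroup.inclusion hMN) ρ)) (x : ↥N) :
    ((indRep (Subgroup.inclusion hMN) ρ g f : ↥(indCarrier (Subgroup.inclusion hMN) ρ))
      : ↥N → V) x = (f : ↥N → V) (x * g) := rfl

lemma findim_ind [Finite G] [FiniteDimensional k V] :
    FiniteDimensional k ↥(indCarrier (Subgroup.inclusion hMN) ρ) := by
  haveI : FiniteDimensional k (↥N → V) := inferInstance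
  infer_instance

end Aux3

section Aux4
variable {k : Type u} [Field k] {G : Type u} [Group G]
variable {V : Type u} [AddCommGroup V] [Module k V]
variable {M N : Subgroup G} (hMN : M ≤ N) (ρ : Representation k ↥M V)

/-- If `n ∈ N` stabilizes the isomorphism class of `ρ` and the induced representation is
simple, then `n ∈ M`. -/
lemma mem_M_of_isConjInv [IsAlgClosed k] [Finite G] [FiniteDimensional k V]
    (hM : M.Normal) (hVs : RepIsSimple ρ)
    (hWs : RepIsSimple (indRep (Subgroup.inclusion hMN) ρ))
    (n : G) (hn : n ∈ N) (hc : IsConjInv M ρ n) : n ∈ M := by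
  by_contra hnM
  obtain ⟨e, he⟩ := hc
  haveI := findim_ind hMN ρ
  haveI : Nontrivial V := hVs.1
  set ι := Subgroup.inclusion hMN with hι
  -- the twisting endomorphism
  have memT : ∀ f : ↥(indCarrier ι ρ), (fun x : ↥N => e ((f : ↥N → V) ((⟨n, hn⟩ : ↥N)⁻¹ * x)))
      ∈ indCarrier ι ρ := by
    intro f h x
    have hy : n⁻¹ * (h : G) * n ∈ M := by
      have := hM.conj_mem (h : G) h.2 n⁻¹
      rwa [inv_inv] at this
    have key : (⟨n, hn⟩ : ↥N)⁻¹ * (ι h * x) = ι ⟨n⁻¹ * (h : G) * n, hy⟩ * ((⟨n, hn⟩ : ↥N)⁻¹ * x) :=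
      Subtype.ext (by show n⁻¹ * ((h:G) * x) = (n⁻¹ * (h:G) * n) * (n⁻¹ * x); group)
    show e ((f : ↥N → V) ((⟨n, hn⟩:↥N)⁻¹ * (ι h * x))) = ρ h (e ((f : ↥N → V) ((⟨n, hn⟩:↥N)⁻¹ * x)))
    rw [key, indCarrier_prop hMN ρ f ⟨n⁻¹ * (h : G) * n, hy⟩ _]
    have hmem : n * (n⁻¹ * (h : G) * n) * n⁻¹ ∈ M := by
      have hgr : n * (n⁻¹ * (h : G) * n) * n⁻¹ = (h : G) := by group
      rw [hgr]; exact h.2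
    rw [he _ hy hmem]
    have hsub : (⟨n * (n⁻¹ * (h : G) * n) * n⁻¹, hmem⟩ : ↥M) = h := Subtype.ext (by group)
    rw [hsub]
  set T : ↥(indCarrier ι ρ) →ₗ[k] ↥(indCarrier ι ρ) :=
    { toFun := fun f => ⟨fun x => e ((f : ↥N → V) ((⟨n, hn⟩ : ↥N)⁻¹ * x)), memT f⟩
      map_add' := fun f f' => by
        apply Subtype.ext; funext x
        simp
      map_smul' := fun c f => by
        apply Subtype.ext; funext x
        simp } with hT
  have hTcomm : ∀ (g : ↥N) (f : ↥(indCarrier ι ρ)),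
      T (indRep ι ρ g f) = indRep ι ρ g (T f) := by
    intro g f
    apply Subtype.ext; funext x
    show e ((f : ↥N → V) ((⟨n, hn⟩:↥N)⁻¹ * x * g)) = e ((f : ↥N → V) ((⟨n, hn⟩:↥N)⁻¹ * (x * g)))
    rw [mul_assoc]
  obtain ⟨c, hcT⟩ := schur_smul_id (indRep ι ρ) hWs T hTcomm
  obtain ⟨v, hv⟩ := exists_ne (0 : V)
  -- evaluate at 1
  have h1 := congrFun (congrArg Subtype.val (hcT (fOnL hMN ρ v))) 1
  have hl1 : ((T (fOnL hMN ρ v) : ↥(indCarrier ι ρ)) : ↥N → V) 1 = 0 := by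
    show e (((fOnL hMN ρ v : ↥(indCarrier ι ρ)) : ↥N → V) ((⟨n, hn⟩:↥N)⁻¹ * 1)) = 0
    rw [mul_one]
    have : ¬ (((⟨n, hn⟩ : ↥N)⁻¹ : ↥N) : G) ∈ M := by
      show ¬ n⁻¹ ∈ M
      exact fun hcon => hnM (by simpa using M.inv_mem hcon)
    rw [fOnL_apply_notMem hMN ρ v _ this, map_zero]
  have hc0 : c = 0 := by
    rw [hl1] at h1
    have : c • v = 0 := by
      have hr : ((c • fOnL hMN ρ v : ↥(indCarrier ι ρ)) : ↥N → V) 1 = c • v := by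
        rw [Submodule.coe_smul, Pi.smul_apply, fOnL_apply_one]
      rw [← hr, ← h1]
    rcases smul_eq_zero.mp this with h | h
    · exact h
    · exact absurd h hv
  -- evaluate at n
  have h2 := congrFun (congrArg Subtype.val (hcT (fOnL hMN ρ v))) ⟨n, hn⟩
  have hl2 : ((T (fOnL hMN ρ v) : ↥(indCarrier ι ρ)) : ↥N → V) ⟨n, hn⟩ = e v := by
    show e (((fOnL hMN ρ v : ↥(indCarrier ι ρ)) : ↥N → V) ((⟨n, hn⟩:↥N)⁻¹ * ⟨n, hn⟩)) = e v
    rw [inv_mul_cancel]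
    rw [fOnL_apply_one]
  rw [hl2, hc0] at h2
  have : e v = 0 := by
    rw [h2, Submodule.coe_smul, Pi.smul_apply, zero_smul]
  exact hv (by simpa using (map_eq_zero_iff e e.injective).mp this)

end Aux4

section Aux5
variable {k : Type u} [Field k] {G : Type u} [Group G]
variable {V : Type u} [AddCommGroup V] [Module k V]
variable {M N : Subgroup G} (hMN : M ≤ N) (ρ : Representation k ↥M V)

/-- Conjugation-stability of `ρ` under `g` transfers to the induced representation. -/
lemma isConjInv_ind (hM : M.Normal) (hN : N.Normal) (g : G) (hc : IsConjInv M ρ g) :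
    IsConjInv N (indRep (Subgroup.inclusion hMN) ρ) g := by
  obtain ⟨e, he⟩ := hc
  set ι := Subgroup.inclusion hMN with hι
  have hesymm : ∀ (z : G) (hz : z ∈ M) (hz2 : g⁻¹ * z * g ∈ M) (w : V),
      e.symm (ρ ⟨z, hz⟩ w) = ρ ⟨g⁻¹ * z * g, hz2⟩ (e.symm w) := by
    intro z hz hz2 w
    apply e.injective
    rw [e.apply_symm_apply]
    have hz3 : g * (g⁻¹ * z * g) * g⁻¹ ∈ M := by
      have hgr : g * (g⁻¹ * z * g) * g⁻¹ = z := by group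
      rw [hgr]; exact hz
    rw [he _ hz2 hz3]
    have hsub : (⟨g * (g⁻¹ * z * g) * g⁻¹, hz3⟩ : ↥M) = ⟨z, hz⟩ := Subtype.ext (by group)
    rw [hsub, e.apply_symm_apply]
  have hNc : ∀ (x : G), x ∈ N → g⁻¹ * x * g ∈ N := by
    intro x hx
    have := hN.conj_mem x hx g⁻¹
    rwa [inv_inv] at this
  have hNc' : ∀ (x : G), x ∈ N → g * x * g⁻¹ ∈ N := fun x hx => hN.conj_mem x hx g
  have hMc : ∀ (x : G), x ∈ M → g⁻¹ * x * g ∈ M := by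
    intro x hx
    have := hM.conj_mem x hx g⁻¹
    rwa [inv_inv] at this
  have hMc' : ∀ (x : G), x ∈ M → g * x * g⁻¹ ∈ M := fun x hx => hM.conj_mem x hx g
  -- forward map
  have memA : ∀ f : ↥(indCarrier ι ρ),
      (fun x : ↥N => e ((f : ↥N → V) ⟨g⁻¹ * (x : G) * g, hNc _ x.2⟩)) ∈ indCarrier ι ρ := by
    intro f h x
    show e ((f : ↥N → V) ⟨g⁻¹ * ((h : G) * (x : G)) * g, _⟩)
      = ρ h (e ((f : ↥N → V) ⟨g⁻¹ * (x : G) * g, _⟩))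
    have key : (⟨g⁻¹ * ((h : G) * (x : G)) * g, hNc _ (ι h * x).2⟩ : ↥N)
        = ι ⟨g⁻¹ * (h : G) * g, hMc _ h.2⟩ * ⟨g⁻¹ * (x : G) * g, hNc _ x.2⟩ :=
      Subtype.ext (by show g⁻¹ * ((h:G) * x) * g = (g⁻¹ * (h:G) * g) * (g⁻¹ * (x:G) * g); group)
    rw [key, indCarrier_prop hMN ρ f]
    have hz3 : g * (g⁻¹ * (h : G) * g) * g⁻¹ ∈ M := by
      have hgr : g * (g⁻¹ * (h : G) * g) * g⁻¹ = (h : G) := by group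
      rw [hgr]; exact h.2
    rw [he _ (hMc _ h.2) hz3]
    have hsub : (⟨g * (g⁻¹ * (h : G) * g) * g⁻¹, hz3⟩ : ↥M) = h := Subtype.ext (by group)
    rw [hsub]
  have memB : ∀ f : ↥(indCarrier ι ρ),
      (fun x : ↥N => e.symm ((f : ↥N → V) ⟨g * (x : G) * g⁻¹, hNc' _ x.2⟩)) ∈ indCarrier ι ρ := by
    intro f h x
    show e.symm ((f : ↥N → V) ⟨g * ((h : G) * (x : G)) * g⁻¹, _⟩)
      = ρ h (e.symm ((f : ↥N → V) ⟨g * (x : G) * g⁻¹, _⟩))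
    have key : (⟨g * ((h : G) * (x : G)) * g⁻¹, hNc' _ (ι h * x).2⟩ : ↥N)
        = ι ⟨g * (h : G) * g⁻¹, hMc' _ h.2⟩ * ⟨g * (x : G) * g⁻¹, hNc' _ x.2⟩ :=
      Subtype.ext (by show g * ((h:G) * x) * g⁻¹ = (g * (h:G) * g⁻¹) * (g * (x:G) * g⁻¹); group)
    rw [key, indCarrier_prop hMN ρ f]
    have hz3 : g⁻¹ * (g * (h : G) * g⁻¹) * g ∈ M := by
      have hgr : g⁻¹ * (g * (h : G) * g⁻¹) * g = (h : G) := by group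
      rw [hgr]; exact h.2
    rw [hesymm _ (hMc' _ h.2) hz3]
    have hsub : (⟨g⁻¹ * (g * (h : G) * g⁻¹) * g, hz3⟩ : ↥M) = h := Subtype.ext (by group)
    rw [hsub]
  set A : ↥(indCarrier ι ρ) →ₗ[k] ↥(indCarrier ι ρ) :=
    { toFun := fun f => ⟨_, memA f⟩
      map_add' := fun f f' => by apply Subtype.ext; funext x; simp
      map_smul' := fun c f => by apply Subtype.ext; funext x; simp } with hA
  set B : ↥(indCarrier ι ρ) →ₗ[k] ↥(indCarrier ι ρ) :=
    { toFun := fun f => ⟨_, memB f⟩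
      map_add' := fun f f' => by apply Subtype.ext; funext x; simp
      map_smul' := fun c f => by apply Subtype.ext; funext x; simp } with hB
  have hAB : A ∘ₗ B = LinearMap.id := by
    apply LinearMap.ext; intro f
    apply Subtype.ext; funext x
    show e (e.symm ((f : ↥N → V) ⟨g * (g⁻¹ * (x : G) * g) * g⁻¹, _⟩)) = (f : ↥N → V) x
    rw [e.apply_symm_apply]
    have hz3 : g * (g⁻¹ * (x : G) * g) * g⁻¹ ∈ N := hN.conj_mem _ (by
      have := hN.conj_mem _ x.2 g⁻¹; rwa [inv_inv] at this) g
    have hsub : (⟨g * (g⁻¹ * (x : G) * g) * g⁻¹, hz3⟩ : ↥N) = x := Subtype.ext (by group)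
    exact congrArg _ hsub
  have hBA : B ∘ₗ A = LinearMap.id := by
    apply LinearMap.ext; intro f
    apply Subtype.ext; funext x
    show e.symm (e ((f : ↥N → V) ⟨g⁻¹ * (g * (x : G) * g⁻¹) * g, _⟩)) = (f : ↥N → V) x
    rw [e.symm_apply_apply]
    have hz3 : g⁻¹ * (g * (x : G) * g⁻¹) * g ∈ N := by
      have := hN.conj_mem _ (hN.conj_mem _ x.2 g) g⁻¹; rwa [inv_inv] at this
    have hsub : (⟨g⁻¹ * (g * (x : G) * g⁻¹) * g, hz3⟩ : ↥N) = x := Subtype.ext (by group)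
    exact congrArg _ hsub
  refine ⟨LinearEquiv.ofLinear A B hAB hBA, ?_⟩
  intro x hx hx' f
  apply Subtype.ext; funext y
  show e ((f : ↥N → V) ((⟨g⁻¹ * (y : G) * g, hNc _ y.2⟩ : ↥N) * ⟨x, hx⟩))
    = e ((f : ↥N → V) ⟨g⁻¹ * ((y : G) * (g * x * g⁻¹)) * g, _⟩)
  have hsub : ((⟨g⁻¹ * (y : G) * g, hNc _ y.2⟩ : ↥N) * ⟨x, hx⟩ : ↥N)
      = ⟨g⁻¹ * ((y : G) * (g * x * g⁻¹)) * g, hNc _ (N.mul_mem y.2 hx')⟩ :=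
    Subtype.ext (by show (g⁻¹ * (y:G) * g) * x = g⁻¹ * ((y:G) * (g * x * g⁻¹)) * g; group)
  rw [hsub]

end Aux5

section Aux6
variable {k : Type u} [Field k] {G : Type u} [Group G]
variable {V : Type u} [AddCommGroup V] [Module k V]
variable {M N : Subgroup G} (hMN : M ≤ N) (ρ : Representation k ↥M V)

/-- If `g` stabilizes the isomorphism class of the induced representation, then some
`N`-translate `n * g` of `g` stabilizes the isomorphism class of `ρ`. -/
lemma exists_translate_isConjInv (hM : M.Normal) (hVs : RepIsSimple ρ) (g : G)
    (hc : IsConjInv N (indRep (Subgroup.inclusion hMN) ρ) g) :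
    ∃ n ∈ N, IsConjInv M ρ (n * g) := by
  obtain ⟨E, hE⟩ := hc
  haveI : Nontrivial V := hVs.1
  obtain ⟨v, hv⟩ := exists_ne (0 : V)
  have hfv : fOnL hMN ρ v ≠ 0 := by
    intro hcon
    apply hv
    have := congrFun (congrArg Subtype.val hcon) 1
    rwa [fOnL_apply_one] at this
  have hEfv : E (fOnL hMN ρ v) ≠ 0 := fun hcon =>
    hfv ((map_eq_zero_iff E E.injective).mp hcon)
  have hx0 : ∃ x₀ : ↥N, ((E (fOnL hMN ρ v) : ↥(indCarrier (Subgroup.inclusion hMN) ρ)) : ↥N → V) x₀ ≠ 0 := by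
    by_contra hcon
    push_neg at hcon
    exact hEfv (Subtype.ext (funext fun x => hcon x))
  obtain ⟨x₀, hx₀⟩ := hx0
  set φ : V →ₗ[k] V :=
    { toFun := fun w => ((E (fOnL hMN ρ w) : ↥(indCarrier (Subgroup.inclusion hMN) ρ)) : ↥N → V) x₀
      map_add' := fun a b => by
        show ((E (fOnL hMN ρ (a + b)) : ↥(indCarrier (Subgroup.inclusion hMN) ρ)) : ↥N → V) x₀
          = ((E (fOnL hMN ρ a) : ↥(indCarrier (Subgroup.inclusion hMN) ρ)) : ↥N → V) x₀
            + ((E (fOnL hMN ρ b) : ↥(indCarrier (Subgroup.inclusion hMN) ρ)) : ↥N → V) x₀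
        rw [map_add, map_add, Submodule.coe_add, Pi.add_apply]
      map_smul' := fun c a => by
        show ((E (fOnL hMN ρ (c • a)) : ↥(indCarrier (Subgroup.inclusion hMN) ρ)) : ↥N → V) x₀
          = c • ((E (fOnL hMN ρ a) : ↥(indCarrier (Subgroup.inclusion hMN) ρ)) : ↥N → V) x₀
        rw [map_smul, map_smul, Submodule.coe_smul, Pi.smul_apply] } with hφdef
  have hφ : φ ≠ 0 := by
    intro hcon
    apply hx₀
    have := congrArg (fun ψ : V →ₗ[k] V => ψ v) hcon
    exact this
  have hcomm : ∀ (x : G) (hx : x ∈ M) (w : V),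
      φ (ρ ⟨x, hx⟩ w) = ρ ⟨(↑x₀ * g) * x * (↑x₀ * g)⁻¹,
        hM.conj_mem x hx (↑x₀ * g)⟩ (φ w) := by
    intro m hm w
    have hNg : g * m * g⁻¹ ∈ N := hMN (hM.conj_mem m hm g)
    show ((E (fOnL hMN ρ (ρ ⟨m, hm⟩ w)) : ↥(indCarrier (Subgroup.inclusion hMN) ρ)) : ↥N → V) x₀ = _
    rw [fOnL_equivariant hMN ρ m hm w]
    rw [hE m (hMN hm) hNg (fOnL hMN ρ w)]
    rw [indRep_apply]
    set F := E (fOnL hMN ρ w) with hF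
    have hMm : (↑x₀ : G) * (g * m * g⁻¹) * (↑x₀ : G)⁻¹ ∈ M :=
      hM.conj_mem _ (hM.conj_mem m hm g) ↑x₀
    have key : (x₀ * (⟨g * m * g⁻¹, hNg⟩ : ↥N) : ↥N)
        = Subgroup.inclusion hMN ⟨(↑x₀ : G) * (g * m * g⁻¹) * (↑x₀ : G)⁻¹, hMm⟩ * x₀ :=
      Subtype.ext (by
        show (↑x₀ : G) * (g * m * g⁻¹) = ((↑x₀ : G) * (g * m * g⁻¹) * (↑x₀:G)⁻¹) * ↑x₀
        group)
    rw [key, indCarrier_prop hMN ρ F]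
    have hsub : (⟨(↑x₀ : G) * (g * m * g⁻¹) * (↑x₀ : G)⁻¹, hMm⟩ : ↥M)
        = ⟨(↑x₀ * g) * m * (↑x₀ * g)⁻¹, hM.conj_mem m hm (↑x₀ * g)⟩ :=
      Subtype.ext (by group)
    rw [hsub]
    rfl
  exact ⟨↑x₀, x₀.2, isConjInv_of_hom ρ hM hVs (↑x₀ * g) φ hφ hcomm⟩

end Aux6

section Dir
variable {k : Type u} [Field k] {G : Type u} [Group G]
variable {V : Type u} [AddCommGroup V] [Module k V]

lemma forward_dir [IsAlgClosed k] [Finite G] [FiniteDimensional k V]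
    {M N : Subgroup G} (hM : M.Normal) (hN : N.Normal) (hMN : M ≤ N)
    (ρ : Representation k ↥M V) (hVsimple : RepIsSimple ρ)
    (hWsimple : RepIsSimple (indRep (Subgroup.inclusion hMN) ρ)) :
    RepExtendsDep M (stabilizerIn ⊤ M (fun g _ x hx => hM.conj_mem x hx g) ρ) ρ →
      RepExtendsDep N (stabilizerIn ⊤ N (fun g _ x hx => hN.conj_mem x hx g)
          (indRep (Subgroup.inclusion hMN) ρ))
        (indRep (Subgroup.inclusion hMN) ρ) := by
  rintro ⟨σ', e, he⟩
  let GV : Subgroup G := stabilizerIn ⊤ M (fun g _ x hx => hM.conj_mem x hx g) ρ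
  let GW : Subgroup G := stabilizerIn ⊤ N (fun g _ x hx => hN.conj_mem x hx g)
    (indRep (Subgroup.inclusion hMN) ρ)
  have hMV : ∀ x : G, x ∈ M → x ∈ GV := fun x hx =>
    mem_stabilizerIn_top.mpr (isConjInv_of_mem hx)
  have hNW : ∀ x : G, x ∈ N → x ∈ GW := fun x hx =>
    mem_stabilizerIn_top.mpr (isConjInv_of_mem hx)
  have hVW : GV ≤ GW := fun g hg =>
    mem_stabilizerIn_top.mpr (isConjInv_ind hMN ρ hM hN g (mem_stabilizerIn_top.mp hg))
  have hVN : ∀ g : G, g ∈ GV → g ∈ N → g ∈ M := fun g hg hgN =>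
    mem_M_of_isConjInv hMN ρ hM hVsimple hWsimple g hgN (mem_stabilizerIn_top.mp hg)
  have hdec : ∀ x : ↥GW, ∃ p : G × G, p.1 ∈ GV ∧ p.2 ∈ N ∧ (x : G) = p.1 * p.2 := by
    intro x
    obtain ⟨n, hn, hc⟩ := exists_translate_isConjInv hMN ρ hM hVsimple (x : G)
      (mem_stabilizerIn_top.mp x.2)
    refine ⟨⟨n * (x : G), (n * (x : G))⁻¹ * n⁻¹ * (n * (x : G))⟩,
      mem_stabilizerIn_top.mpr hc, ?_, by group⟩
    have : (n * (x:G))⁻¹ * n⁻¹ * ((n * (x:G))⁻¹)⁻¹ ∈ N :=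
      hN.conj_mem n⁻¹ (N.inv_mem hn) (n * (x:G))⁻¹
    rwa [inv_inv] at this
  -- normalize so the extension restricts to ρ on the nose
  let σ₀ : Representation k ↥GV V := conjRep σ' e
  have hσ₀ : ∀ (g : G) (hK : g ∈ M) (hL : g ∈ GV) (v : V),
      σ₀ ⟨g, hL⟩ v = ρ ⟨g, hK⟩ v := by
    intro g hK hL v
    show e.symm (σ' ⟨g, hL⟩ (e v)) = ρ ⟨g, hK⟩ v
    rw [← he g hK hL, e.symm_apply_apply]
  -- the restriction map from Ind_{GV}^{GW} σ₀ to Ind_M^N ρ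
  have memR : ∀ f : ↥(indCarrier (Subgroup.inclusion hVW) σ₀),
      (fun x : ↥N => (f : ↥GW → V) ⟨(x : G), hNW _ x.2⟩)
        ∈ indCarrier (Subgroup.inclusion hMN) ρ := by
    intro f h x
    have key : (⟨((Subgroup.inclusion hMN h * x : ↥N) : G),
          hNW _ (Subgroup.inclusion hMN h * x).2⟩ : ↥GW)
        = Subgroup.inclusion hVW ⟨(h : G), hMV _ h.2⟩ * ⟨(x : G), hNW _ x.2⟩ :=
      Subtype.ext rfl
    show (f : ↥GW → V) _ = ρ h ((f : ↥GW → V) ⟨(x : G), hNW _ x.2⟩)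
    rw [key, f.2 ⟨(h : G), hMV _ h.2⟩ ⟨(x : G), hNW _ x.2⟩, hσ₀ _ h.2]
  let rmap : ↥(indCarrier (Subgroup.inclusion hVW) σ₀)
      →ₗ[k] ↥(indCarrier (Subgroup.inclusion hMN) ρ) :=
    { toFun := fun f => ⟨_, memR f⟩
      map_add' := fun f f' => by apply Subtype.ext; funext x; rfl
      map_smul' := fun c f => by apply Subtype.ext; funext x; rfl }
  -- well-definedness of the inverse construction
  have wd : ∀ (gX : ↥(indCarrier (Subgroup.inclusion hMN) ρ)) (h n : G) (hh : h ∈ GV)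
      (hn : n ∈ N) (x : ↥GW), (x : G) = h * n →
      σ₀ ⟨(hdec x).choose.1, (hdec x).choose_spec.1⟩
          ((gX : ↥N → V) ⟨(hdec x).choose.2, (hdec x).choose_spec.2.1⟩)
        = σ₀ ⟨h, hh⟩ ((gX : ↥N → V) ⟨n, hn⟩) := by
    intro gX h n hh hn x hx
    obtain ⟨hh', hn', hx'⟩ := (hdec x).choose_spec
    set h' := (hdec x).choose.1 with hh'def
    set n' := (hdec x).choose.2 with hn'def
    have heq : h * n = h' * n' := by rw [← hx, ← hx']
    have hmVal : h⁻¹ * h' = n * n'⁻¹ := by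
      calc h⁻¹ * h' = h⁻¹ * (h' * n') * n'⁻¹ := by group
        _ = h⁻¹ * (h * n) * n'⁻¹ := by rw [← heq]
        _ = n * n'⁻¹ := by group
    have hm : h⁻¹ * h' ∈ M := by
      apply hVN _ (GV.mul_mem (GV.inv_mem hh) hh')
      rw [hmVal]
      exact N.mul_mem hn (N.inv_mem hn')
    have hnn : (⟨n, hn⟩ : ↥N) = Subgroup.inclusion hMN ⟨h⁻¹ * h', hm⟩ * ⟨n', hn'⟩ :=
      Subtype.ext (by
        show n = (h⁻¹ * h') * n'
        rw [hmVal]; group)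
    rw [hnn, indCarrier_prop hMN ρ gX, ← hσ₀ _ hm (hMV _ hm)]
    rw [← Module.End.mul_apply, ← map_mul]
    have : (⟨h, hh⟩ : ↥GV) * ⟨h⁻¹ * h', hMV _ hm⟩ = ⟨h', hh'⟩ :=
      Subtype.ext (show h * (h⁻¹ * h') = h' by group)
    rw [this]
  have memS : ∀ gX : ↥(indCarrier (Subgroup.inclusion hMN) ρ),
      (fun x : ↥GW => σ₀ ⟨(hdec x).choose.1, (hdec x).choose_spec.1⟩
          ((gX : ↥N → V) ⟨(hdec x).choose.2, (hdec x).choose_spec.2.1⟩))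
        ∈ indCarrier (Subgroup.inclusion hVW) σ₀ := by
    intro gX h x
    obtain ⟨hh1, hn1, hx1⟩ := (hdec x).choose_spec
    have hdecomp : ((Subgroup.inclusion hVW h * x : ↥GW) : G)
        = ((h : G) * (hdec x).choose.1) * (hdec x).choose.2 := by
      have h0 : ((Subgroup.inclusion hVW h * x : ↥GW) : G)
          = (h : G) * ((hdec x).choose.1 * (hdec x).choose.2) :=
        congrArg (fun t => (h : G) * t) hx1
      rw [h0, mul_assoc]
    beta_reduce
    rw [wd gX ((h : G) * (hdec x).choose.1) (hdec x).choose.2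
      (GV.mul_mem h.2 hh1) hn1 _ hdecomp]
    rw [wd gX (hdec x).choose.1 (hdec x).choose.2 hh1 hn1 x hx1]
    have hprod : (⟨(h : G) * (hdec x).choose.1, GV.mul_mem h.2 hh1⟩ : ↥GV)
        = h * ⟨(hdec x).choose.1, hh1⟩ := Subtype.ext rfl
    rw [hprod, map_mul, Module.End.mul_apply]
  let smap : ↥(indCarrier (Subgroup.inclusion hMN) ρ)
      →ₗ[k] ↥(indCarrier (Subgroup.inclusion hVW) σ₀) :=
    { toFun := fun gX => ⟨_, memS gX⟩
      map_add' := fun gX gX' => by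
        apply Subtype.ext; funext x
        show σ₀ _ (((gX + gX' : _) : ↥N → V) _) = _
        rw [Submodule.coe_add, Pi.add_apply, map_add]
        rfl
      map_smul' := fun c gX => by
        apply Subtype.ext; funext x
        show σ₀ _ (((c • gX : _) : ↥N → V) _) = _
        rw [Submodule.coe_smul, Pi.smul_apply, map_smul]
        rfl }
  have hRS : rmap ∘ₗ smap = LinearMap.id := by
    apply LinearMap.ext; intro gX
    apply Subtype.ext; funext x
    show σ₀ _ ((gX : ↥N → V) _) = (gX : ↥N → V) x
    rw [wd gX 1 (x : G) GV.one_mem x.2 ⟨(x : G), hNW _ x.2⟩ (by rw [one_mul])]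
    have h1 : (⟨1, GV.one_mem⟩ : ↥GV) = 1 := Subtype.ext rfl
    rw [h1, map_one]
    rfl
  have hSR : smap ∘ₗ rmap = LinearMap.id := by
    apply LinearMap.ext; intro f
    apply Subtype.ext; funext x
    obtain ⟨hh1, hn1, hx1⟩ := (hdec x).choose_spec
    show σ₀ ⟨(hdec x).choose.1, hh1⟩
      ((f : ↥GW → V) ⟨((hdec x).choose.2 : G), hNW _ hn1⟩) = (f : ↥GW → V) x
    have hxdec : (Subgroup.inclusion hVW ⟨(hdec x).choose.1, hh1⟩
        * ⟨(hdec x).choose.2, hNW _ hn1⟩ : ↥GW) = x := Subtype.ext hx1.symm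
    have h3 := f.2 ⟨(hdec x).choose.1, hh1⟩ (⟨(hdec x).choose.2, hNW _ hn1⟩ : ↥GW)
    rw [hxdec] at h3
    exact h3.symm
  let r : ↥(indCarrier (Subgroup.inclusion hVW) σ₀)
      ≃ₗ[k] ↥(indCarrier (Subgroup.inclusion hMN) ρ) :=
    LinearEquiv.ofLinear rmap smap hRS hSR
  refine ⟨conjRep (indRep (Subgroup.inclusion hVW) σ₀) r.symm, LinearEquiv.refl k _, ?_⟩
  intro g hK hL w
  rw [LinearEquiv.refl_apply, LinearEquiv.refl_apply, conjRep_apply]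
  have key : ∀ u : ↥(indCarrier (Subgroup.inclusion hVW) σ₀),
      r (indRep (Subgroup.inclusion hVW) σ₀ ⟨g, hL⟩ u)
        = indRep (Subgroup.inclusion hMN) ρ ⟨g, hK⟩ (r u) := by
    intro u
    apply Subtype.ext; funext x
    show (u : ↥GW → V) (⟨(x : G), hNW _ x.2⟩ * ⟨g, hL⟩)
      = (u : ↥GW → V) ⟨((x * (⟨g, hK⟩ : ↥N) : ↥N) : G), hNW _ (x * ⟨g, hK⟩).2⟩
    rfl
  rw [LinearEquiv.symm_symm, key (r.symm w), r.apply_symm_apply]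

set_option maxHeartbeats 4000000 in
lemma backward_dir [IsAlgClosed k] [Finite G] [FiniteDimensional k V]
    {M N : Subgroup G} (hM : M.Normal) (hN : N.Normal) (hMN : M ≤ N)
    (ρ : Representation k ↥M V) (hVsimple : RepIsSimple ρ)
    (hWsimple : RepIsSimple (indRep (Subgroup.inclusion hMN) ρ)) :
    RepExtendsDep N (stabilizerIn ⊤ N (fun g _ x hx => hN.conj_mem x hx g)
          (indRep (Subgroup.inclusion hMN) ρ))
        (indRep (Subgroup.inclusion hMN) ρ) →
    RepExtendsDep M (stabilizerIn ⊤ M (fun g _ x hx => hM.conj_mem x hx g) ρ) ρ := by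
  rintro ⟨σ', e, he⟩
  let GV : Subgroup G := stabilizerIn ⊤ M (fun g _ x hx => hM.conj_mem x hx g) ρ
  let GW : Subgroup G := stabilizerIn ⊤ N (fun g _ x hx => hN.conj_mem x hx g)
    (indRep (Subgroup.inclusion hMN) ρ)
  have hMV : ∀ x : G, x ∈ M → x ∈ GV := fun x hx =>
    mem_stabilizerIn_top.mpr (isConjInv_of_mem hx)
  have hNW : ∀ x : G, x ∈ N → x ∈ GW := fun x hx =>
    mem_stabilizerIn_top.mpr (isConjInv_of_mem hx)
  have hVW : GV ≤ GW := fun g hg =>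
    mem_stabilizerIn_top.mpr (isConjInv_ind hMN ρ hM hN g (mem_stabilizerIn_top.mp hg))
  have hVN : ∀ g : G, g ∈ GV → g ∈ N → g ∈ M := fun g hg hgN =>
    mem_M_of_isConjInv hMN ρ hM hVsimple hWsimple g hgN (mem_stabilizerIn_top.mp hg)
  let σ : Representation k ↥GW ↥(indCarrier (Subgroup.inclusion hMN) ρ) := conjRep σ' e
  have hσN : ∀ (n : G) (hn : n ∈ N) (hnW : n ∈ GW)
      (f : ↥(indCarrier (Subgroup.inclusion hMN) ρ)),
      σ ⟨n, hnW⟩ f = indRep (Subgroup.inclusion hMN) ρ ⟨n, hn⟩ f := by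
    intro n hn hnW f
    show e.symm (σ' ⟨n, hnW⟩ (e f)) = _
    rw [← he n hn hnW, e.symm_apply_apply]
  -- vanishing off M of σ(h) applied to functions supported on M, for h in the stabilizer
  have key1 : ∀ (h : G) (hh : h ∈ GV) (v : V) (x : ↥N), ¬ ((x : G) ∈ M) →
      ((σ ⟨h, hVW hh⟩ (fOnL hMN ρ v) : ↥(indCarrier (Subgroup.inclusion hMN) ρ)) : ↥N → V) x
        = 0 := by
    intro h hh v x
    by_contra hne
    push_neg at hne
    obtain ⟨hxM, hne⟩ := hne
    set φ : V →ₗ[k] V :=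
      { toFun := fun w =>
          ((σ ⟨h, hVW hh⟩ (fOnL hMN ρ w) : ↥(indCarrier (Subgroup.inclusion hMN) ρ)) : ↥N → V) x
        map_add' := fun a b => by
          show ((σ ⟨h, hVW hh⟩ (fOnL hMN ρ (a + b)) :
              ↥(indCarrier (Subgroup.inclusion hMN) ρ)) : ↥N → V) x = _
          rw [map_add, map_add, Submodule.coe_add, Pi.add_apply]
        map_smul' := fun c a => by
          show ((σ ⟨h, hVW hh⟩ (fOnL hMN ρ (c • a)) :
              ↥(indCarrier (Subgroup.inclusion hMN) ρ)) : ↥N → V) x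
            = c • ((σ ⟨h, hVW hh⟩ (fOnL hMN ρ a) :
              ↥(indCarrier (Subgroup.inclusion hMN) ρ)) : ↥N → V) x
          rw [map_smul, map_smul, Submodule.coe_smul, Pi.smul_apply] } with hφdef
    have hφ : φ ≠ 0 := fun hcon => hne (congrArg (fun ψ : V →ₗ[k] V => ψ v) hcon)
    have hcomm : ∀ (m : G) (hm : m ∈ M) (w : V),
        φ (ρ ⟨m, hm⟩ w) = ρ ⟨((x : G) * h) * m * ((x : G) * h)⁻¹,
          hM.conj_mem m hm ((x : G) * h)⟩ (φ w) := by
      intro m hm w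
      have hgm : h * m * h⁻¹ ∈ M := hM.conj_mem m hm h
      show ((σ ⟨h, hVW hh⟩ (fOnL hMN ρ (ρ ⟨m, hm⟩ w)) :
          ↥(indCarrier (Subgroup.inclusion hMN) ρ)) : ↥N → V) x = _
      rw [fOnL_equivariant hMN ρ m hm w]
      rw [← hσN m (hMN hm) (hNW _ (hMN hm)) (fOnL hMN ρ w)]
      rw [← Module.End.mul_apply, ← map_mul]
      have hmul : (⟨h, hVW hh⟩ : ↥GW) * ⟨m, hNW _ (hMN hm)⟩
          = ⟨h * m * h⁻¹, hNW _ (hMN hgm)⟩ * ⟨h, hVW hh⟩ :=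
        Subtype.ext (show h * m = (h * m * h⁻¹) * h by group)
      rw [hmul, map_mul, Module.End.mul_apply]
      rw [hσN (h * m * h⁻¹) (hMN hgm) (hNW _ (hMN hgm))]
      rw [indRep_apply]
      set F := σ ⟨h, hVW hh⟩ (fOnL hMN ρ w) with hF
      have hMm : (x : G) * (h * m * h⁻¹) * (x : G)⁻¹ ∈ M := hM.conj_mem _ hgm (x : G)
      have key : (x * (⟨h * m * h⁻¹, hMN hgm⟩ : ↥N) : ↥N)
          = Subgroup.inclusion hMN ⟨(x : G) * (h * m * h⁻¹) * (x : G)⁻¹, hMm⟩ * x :=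
        Subtype.ext (by
          show (x : G) * (h * m * h⁻¹) = ((x : G) * (h * m * h⁻¹) * (x : G)⁻¹) * (x : G)
          group)
      rw [key, indCarrier_prop hMN ρ F]
      have hsub : (⟨(x : G) * (h * m * h⁻¹) * (x : G)⁻¹, hMm⟩ : ↥M)
          = ⟨((x : G) * h) * m * ((x : G) * h)⁻¹, hM.conj_mem m hm ((x : G) * h)⟩ :=
        Subtype.ext (by group)
      rw [hsub]
      rfl
    have hxh : (x : G) * h ∈ GV :=
      mem_stabilizerIn_top.mpr (isConjInv_of_hom ρ hM hVsimple ((x : G) * h) φ hφ hcomm)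
    have hxGV : (x : G) ∈ GV := by
      have h2 := GV.mul_mem hxh (GV.inv_mem hh)
      have h3 : (x : G) * h * h⁻¹ = (x : G) := by group
      rwa [h3] at h2
    exact hxM (hVN _ hxGV x.2)
  -- functions vanishing off M are determined by their value at 1
  have key0 : ∀ F : ↥(indCarrier (Subgroup.inclusion hMN) ρ),
      (∀ x : ↥N, ¬ ((x : G) ∈ M) → (F : ↥N → V) x = 0) →
      F = fOnL hMN ρ ((F : ↥N → V) 1) := by
    intro F hF
    apply Subtype.ext; funext x
    by_cases hx : (x : G) ∈ M
    · have hr : ((fOnL hMN ρ ((F : ↥N → V) 1) :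
          ↥(indCarrier (Subgroup.inclusion hMN) ρ)) : ↥N → V) x
          = ρ ⟨(x : G), hx⟩ ((F : ↥N → V) 1) := fOnL_apply_mem hMN ρ _ x hx
      rw [hr]
      have hx1 : (Subgroup.inclusion hMN ⟨(x : G), hx⟩ * 1 : ↥N) = x :=
        Subtype.ext (mul_one _)
      have h3 := F.2 (⟨(x : G), hx⟩ : ↥M) (1 : ↥N)
      rw [hx1] at h3
      exact h3
    · rw [hF x hx, fOnL_apply_notMem hMN ρ _ x hx]
  -- the extension of ρ to GV
  let ev1 : ↥(indCarrier (Subgroup.inclusion hMN) ρ) →ₗ[k] V :=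
    (LinearMap.proj (1 : ↥N)).comp (Submodule.subtype _)
  refine ⟨{ toFun := fun h => ev1 ∘ₗ (σ ⟨(h : G), hVW h.2⟩ ∘ₗ fOnL hMN ρ)
            map_one' := ?_
            map_mul' := ?_ }, LinearEquiv.refl k V, ?_⟩
  · apply LinearMap.ext; intro v
    show ev1 (σ ⟨((1 : ↥GV) : G), hVW (1 : ↥GV).2⟩ (fOnL hMN ρ v)) = v
    have h1 : (⟨((1 : ↥GV) : G), hVW (1 : ↥GV).2⟩ : ↥GW) = 1 := Subtype.ext rfl
    rw [h1, map_one]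
    exact fOnL_apply_one hMN ρ v
  · intro h₁ h₂
    apply LinearMap.ext; intro v
    show ev1 (σ ⟨((h₁ * h₂ : ↥GV) : G), hVW (h₁ * h₂).2⟩ (fOnL hMN ρ v))
      = ev1 (σ ⟨(h₁ : G), hVW h₁.2⟩ (fOnL hMN ρ
          (ev1 (σ ⟨(h₂ : G), hVW h₂.2⟩ (fOnL hMN ρ v)))))
    have h1 : (⟨((h₁ * h₂ : ↥GV) : G), hVW (h₁ * h₂).2⟩ : ↥GW)
        = ⟨(h₁ : G), hVW h₁.2⟩ * ⟨(h₂ : G), hVW h₂.2⟩ := Subtype.ext rfl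
    rw [h1, map_mul, Module.End.mul_apply]
    conv_lhs => rw [key0 (σ ⟨(h₂ : G), hVW h₂.2⟩ (fOnL hMN ρ v))
      (fun x hx => key1 _ h₂.2 v x hx)]
    rfl
  · intro g hK hL v
    rw [LinearEquiv.refl_apply, LinearEquiv.refl_apply]
    show ρ ⟨g, hK⟩ v = ev1 (σ ⟨g, hVW hL⟩ (fOnL hMN ρ v))
    rw [show ev1 (σ ⟨g, hVW hL⟩ (fOnL hMN ρ v))
        = ((σ ⟨g, hVW hL⟩ (fOnL hMN ρ v) :
            ↥(indCarrier (Subgroup.inclusion hMN) ρ)) : ↥N → V) 1 from rfl]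
    rw [hσN g (hMN hK) (hVW hL) (fOnL hMN ρ v), indRep_apply]
    rw [one_mul, fOnL_apply_mem hMN ρ v ⟨g, hMN hK⟩ hK]

end Dir

/-- Let `k` be an algebraically closed field of characteristic `ℓ > 0`, and let
`G` be a finite group with normal subgroups `M ≤ N`. Let `V` be a simple `kM`-module and suppose
that `W := Ind^N_M V` is a simple `kN`-module. Then `V` extends to its stabilizer `G_V` if and
only if `W` extends to its stabilizer `G_W`. -/
theorem extends_stabilizer_iff_ind_extends_stabilizer
    (k : Type u) [Field k] [IsAlgClosed k] (ℓ : ℕ) [CharP k ℓ] (hℓ : 0 < ℓ)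
    (G : Type u) [Group G] [Finite G]
    (M N : Subgroup G) (hM : M.Normal) (hN : N.Normal) (hMN : M ≤ N)
    (V : Type u) [AddCommGroup V] [Module k V] [FiniteDimensional k V]
    (ρ : Representation k ↥M V) (hVsimple : RepIsSimple ρ)
    (hWsimple : RepIsSimple (indRep (Subgroup.inclusion hMN) ρ)) :
    RepExtendsDep M (stabilizerIn ⊤ M (fun g _ x hx => hM.conj_mem x hx g) ρ) ρ ↔
      RepExtendsDep N (stabilizerIn ⊤ N (fun g _ x hx => hN.conj_mem x hx g)
          (indRep (Subgroup.inclusion hMN) ρ))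
        (indRep (Subgroup.inclusion hMN) ρ) :=
  ⟨forward_dir hM hN hMN ρ hVsimple hWsimple, backward_dir hM hN hMN ρ hVsimple hWsimple⟩
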